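/- arXiv:2507.15141 — 4 statements merged into one kernel-verified Lean document; each statement's English description precedes it below -/
import Mathlib

section
/- Let d ≥ 2 and let n ≥ 2d−2 be an even integer. Let c ∈ (S_d)^n be a tuple all of whose entries are transpositions, whose entries generate a transitive subgroup of S_d, and whose product satisfies c_0 c_1 ⋯ c_{n−1} = 1. Then there exist g ∈ S_d and β ∈ B_n such that β·(g c_0 g⁻¹, …, g c_{n−1} g⁻¹) = c⁰, the standard tuple. (This is the combinatorial form of the statement that for fixed degree and number of branch points there is a unique connected simple branched cover of S², so its branch data can be put in standard form.) -/
/-- The `i`-th Hurwitz move on `n`-tuples of elements of a group `G`: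
it replaces `(…, cᵢ, cᵢ₊₁, …)` by `(…, cᵢ cᵢ₊₁ cᵢ⁻¹, cᵢ, …)` and is the
identity when `i + 1 ≥ n`. -/
def hurwitzMove {G : Type*} [Group G] {n : ℕ} (i : ℕ) (c : Fin n → G) : Fin n → G :=
  fun k =>
    if _h1 : (k : ℕ) = i then
      if h2 : i + 1 < n then
        c ⟨i, Nat.lt_of_succ_lt h2⟩ * c ⟨i + 1, h2⟩ * (c ⟨i, Nat.lt_of_succ_lt h2⟩)⁻¹
      else c k
    else if h2 : (k : ℕ) = i + 1 then
      c ⟨i, by have := k.isLt; omega⟩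
    else c k

/-- The braid relations on the free group on `n - 1` generators `σ_0, …, σ_{n-2}`:
commutation `σ_i σ_j = σ_j σ_i` for `|i - j| ≥ 2` and the braid relation
`σ_i σ_{i+1} σ_i = σ_{i+1} σ_i σ_{i+1}`. -/
def braidRels (n : ℕ) : Set (FreeGroup (Fin (n - 1))) :=
  {r | (∃ i j : Fin (n - 1), (i : ℕ) + 2 ≤ (j : ℕ) ∧
          r = FreeGroup.of i * FreeGroup.of j * (FreeGroup.of i)⁻¹ * (FreeGroup.of j)⁻¹) ∨
       (∃ i j : Fin (n - 1), (j : ℕ) = (i : ℕ) + 1 ∧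
          r = FreeGroup.of i * FreeGroup.of j * FreeGroup.of i *
              (FreeGroup.of j * FreeGroup.of i * FreeGroup.of j)⁻¹)}

/-- The braid group `B_n`, presented on generators `σ_0, …, σ_{n-2}` subject to
the braid relations. -/
abbrev BraidGroup (n : ℕ) := PresentedGroup (braidRels n)

/-- The Artin generator `σ_i` of the braid group `B_n` (equal to `1` if `i` is
out of range). -/
def braidGen (n i : ℕ) : BraidGroup n :=
  if h : i < n - 1 then PresentedGroup.of (⟨i, h⟩ : Fin (n - 1)) else 1

/-- `φ` is the Hurwitz action of `B_n` on `G^n`, i.e. the group action under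
which each Artin generator `σ_i` acts by the Hurwitz move `h_i`. -/
def IsHurwitzAction {G : Type*} [Group G] {n : ℕ}
    (φ : BraidGroup n →* Equiv.Perm (Fin n → G)) : Prop :=
  ∀ i : ℕ, i + 1 < n → ∀ c : Fin n → G, φ (braidGen n i) c = hurwitzMove i c

/-- The standard tuple `c⁰ ∈ (S_d)^n` (for `d ≥ 2`, `n ≥ 2d - 2`):
`c⁰_{2k} = c⁰_{2k+1}` is the transposition `(d-1-k, d-k)` for `0 ≤ k ≤ d-3`,
and `c⁰_i` is the transposition `(1, 2)` for `2d-4 ≤ i ≤ n-1`.  Points of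
`{1, …, d}` are represented by `Fin d` via `m ↦ m - 1`. -/
def stdTuple (d n : ℕ) : Fin n → Equiv.Perm (Fin d) := fun i =>
  if h : (i : ℕ) + 4 ≤ 2 * d then
    Equiv.swap ⟨d - 2 - (i : ℕ) / 2, by omega⟩ ⟨d - 1 - (i : ℕ) / 2, by omega⟩
  else if h2 : 2 ≤ d then Equiv.swap ⟨0, by omega⟩ ⟨1, by omega⟩ else 1

/-!
Tuples are handled as lists up to Hurwitz equivalence, the equivalence relation generated by
Hurwitz moves, which the braid action realizes on tuples. The proof is by induction on
the degree `e`, with `top = e - 1` the last point. The entries moving `top` can be gathered in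
front. Two adjacent distinct ones merge, by one Hurwitz move, into a transposition fixing `top`; if
they are all equal, transitivity supplies a conjugate of a pair of them that differs from the rest.
Since the product is trivial, this stops at exactly two equal entries `t, t` through `top`. Such a
pair can be conjugated in place by anything generated by the other entries, which turns it into
`swap (e - 2) (e - 1)` and leaves branch data of degree `e - 1`. No global conjugation is needed.
-/

open Equiv Equiv.Perm MulAction
open scoped Pointwise

section Hurwitz

variable {G : Type*} [Group G]

theorem conj_mul_self_eq_one {t : G} (htt : t * t = 1) (g : G) :
    g * t * g⁻¹ * (g * t * g⁻¹) = 1 := by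
  simp [mul_assoc, ← mul_assoc t t, htt]

inductive HurwitzStep : List G → List G → Prop
  | mk (u : List G) (a b : G) (v : List G) :
      HurwitzStep (u ++ a :: b :: v) (u ++ (a * b * a⁻¹) :: a :: v)

def HurwitzEquiv : List G → List G → Prop := Relation.EqvGen HurwitzStep

namespace HurwitzEquiv

@[refl] theorem refl (l : List G) : HurwitzEquiv l l := Relation.EqvGen.refl l

theorem symm {l₁ l₂ : List G} (h : HurwitzEquiv l₁ l₂) : HurwitzEquiv l₂ l₁ :=
  Relation.EqvGen.symm _ _ h

theorem trans {l₁ l₂ l₃ : List G} (h₁₂ : HurwitzEquiv l₁ l₂)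
    (h₂₃ : HurwitzEquiv l₂ l₃) : HurwitzEquiv l₁ l₃ :=
  Relation.EqvGen.trans _ _ _ h₁₂ h₂₃

theorem step (u : List G) (a b : G) (v : List G) :
    HurwitzEquiv (u ++ a :: b :: v) (u ++ (a * b * a⁻¹) :: a :: v) :=
  Relation.EqvGen.rel _ _ (HurwitzStep.mk u a b v)

theorem append_left {l₁ l₂ : List G} (h : HurwitzEquiv l₁ l₂) (u : List G) :
    HurwitzEquiv (u ++ l₁) (u ++ l₂) := by
  induction h with
  | rel _ _ h =>
    obtain ⟨u', a, b, v⟩ := h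
    simpa using step (u ++ u') a b v
  | refl => rfl
  | symm _ _ _ ih => exact ih.symm
  | trans _ _ _ _ _ ih₁ ih₂ => exact ih₁.trans ih₂

theorem cons {l₁ l₂ : List G} (h : HurwitzEquiv l₁ l₂) (a : G) :
    HurwitzEquiv (a :: l₁) (a :: l₂) :=
  h.append_left [a]

theorem eq_of_step {β : Type*} (f : List G → β)
    (hf : ∀ u a b v, f (u ++ a :: b :: v) = f (u ++ (a * b * a⁻¹) :: a :: v))
    {l₁ l₂ : List G} (h : HurwitzEquiv l₁ l₂) : f l₁ = f l₂ := by
  induction h with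
  | rel _ _ h => obtain ⟨u, a, b, v⟩ := h; exact hf u a b v
  | refl => rfl
  | symm _ _ _ ih => exact ih.symm
  | trans _ _ _ _ _ ih₁ ih₂ => exact ih₁.trans ih₂

theorem length_eq {l₁ l₂ : List G} (h : HurwitzEquiv l₁ l₂) : l₁.length = l₂.length :=
  h.eq_of_step _ fun _ _ _ _ => by simp

theorem prod_eq {l₁ l₂ : List G} (h : HurwitzEquiv l₁ l₂) : l₁.prod = l₂.prod :=
  h.eq_of_step _ fun _ _ _ _ => by simp [mul_assoc]

theorem closure_eq {l₁ l₂ : List G} (h : HurwitzEquiv l₁ l₂) :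
    Subgroup.closure {x | x ∈ l₁} = Subgroup.closure {x | x ∈ l₂} := by
  refine h.eq_of_step (fun l => Subgroup.closure {x | x ∈ l}) fun u a b v => ?_
  have mem {l : List G} {x : G} (hx : x ∈ l) : x ∈ Subgroup.closure {x | x ∈ l} :=
    Subgroup.subset_closure hx
  have ha₁ : a ∈ Subgroup.closure {x | x ∈ u ++ a :: b :: v} := mem (by simp)
  have hb₁ : b ∈ Subgroup.closure {x | x ∈ u ++ a :: b :: v} := mem (by simp)
  have ha₂ : a ∈ Subgroup.closure {x | x ∈ u ++ (a * b * a⁻¹) :: a :: v} := mem (by simp)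
  have hc₂ : a * b * a⁻¹ ∈ Subgroup.closure {x | x ∈ u ++ (a * b * a⁻¹) :: a :: v} :=
    mem (by simp)
  apply le_antisymm <;> rw [Subgroup.closure_le] <;> intro x hx <;>
    simp only [Set.mem_ofPred_eq, List.mem_append, List.mem_cons] at hx
  · rcases hx with hx | rfl | rfl | hx
    · exact mem (by simp [hx])
    · exact ha₂
    · simpa [mul_assoc] using mul_mem (mul_mem (inv_mem ha₂) hc₂) ha₂
    · exact mem (by simp [hx])
  · rcases hx with hx | rfl | rfl | hx
    · exact mem (by simp [hx])
    · exact mul_mem (mul_mem ha₁ hb₁) (inv_mem ha₁)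
    · exact ha₁
    · exact mem (by simp [hx])

theorem conjugatesOfSet_eq {l₁ l₂ : List G} (h : HurwitzEquiv l₁ l₂) :
    Group.conjugatesOfSet {x | x ∈ l₁} = Group.conjugatesOfSet {x | x ∈ l₂} := by
  refine h.eq_of_step (fun l => Group.conjugatesOfSet {x | x ∈ l}) fun u a b v => ?_
  have hb : IsConj b (a * b * a⁻¹) := isConj_iff.2 ⟨a, rfl⟩
  ext y
  simp only [Group.mem_conjugatesOfSet_iff, Set.mem_ofPred_eq, List.mem_append, List.mem_cons]
  constructor
  · rintro ⟨x, hx | rfl | rfl | hx, hxy⟩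
    · exact ⟨x, Or.inl hx, hxy⟩
    · exact ⟨x, by simp, hxy⟩
    · exact ⟨_, by simp, hb.symm.trans hxy⟩
    · exact ⟨x, by simp [hx], hxy⟩
  · rintro ⟨x, hx | rfl | rfl | hx, hxy⟩
    · exact ⟨x, Or.inl hx, hxy⟩
    · exact ⟨b, by simp, hb.trans hxy⟩
    · exact ⟨_, by simp, hxy⟩
    · exact ⟨x, by simp [hx], hxy⟩

theorem exists_isConj {l₁ l₂ : List G} (h : HurwitzEquiv l₁ l₂) {y : G} (hy : y ∈ l₂) :
    ∃ x ∈ l₁, IsConj x y :=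
  Group.mem_conjugatesOfSet_iff.1 <| h.conjugatesOfSet_eq ▸ Group.subset_conjugatesOfSet hy

theorem cons_append_map_conj (a : G) (y z : List G) :
    HurwitzEquiv (a :: (y ++ z)) (y.map (fun b => a * b * a⁻¹) ++ a :: z) := by
  induction y with
  | nil => rfl
  | cons b y ih => exact (step [] a b (y ++ z)).trans (ih.cons _)

theorem pair_cons_append {t : G} (htt : t * t = 1) (y z : List G) :
    HurwitzEquiv (t :: t :: (y ++ z)) (y ++ t :: t :: z) := by
  have hconj : (fun b => t * b * t⁻¹) ∘ (fun b => t * b * t⁻¹) = id := by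
    funext b
    rw [← mul_eq_one_iff_eq_inv.1 htt]
    simp [mul_assoc, ← mul_assoc t t, htt]
  have h := ((cons_append_map_conj t y z).cons t).trans (cons_append_map_conj t (y.map _) (t :: z))
  rwa [List.map_map, hconj, List.map_id] at h

/-- For a generator `r` of `l`, move the pair next to `r` and back again: passing `r` conjugates
it by `r`. -/
theorem pair_conj {t g : G} (htt : t * t = 1) {l : List G}
    (hg : g ∈ Subgroup.closure {x | x ∈ l}) :
    HurwitzEquiv (t :: t :: l) ((g * t * g⁻¹) :: (g * t * g⁻¹) :: l) := by
  induction hg using Subgroup.closure_induction generalizing t with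
  | mem r hr =>
    obtain ⟨l₁, l₂, rfl⟩ := List.append_of_mem hr
    have h₁ := pair_cons_append htt (l₁ ++ [r]) l₂
    have h₂ := (cons_append_map_conj r [t, t] l₂).append_left l₁
    have h₃ := (pair_cons_append (conj_mul_self_eq_one htt r) l₁ (r :: l₂)).symm
    simp only [List.append_assoc, List.cons_append, List.nil_append, List.map_cons,
      List.map_nil] at h₁ h₂ h₃ ⊢
    exact h₁.trans (h₂.trans h₃)
  | one => simpa using refl (t :: t :: l)
  | mul x y _ _ ihx ihy =>
    simpa [mul_assoc] using (ihy htt).trans (ihx (conj_mul_self_eq_one htt y))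
  | inv x _ ihx =>
    simpa [mul_assoc] using (ihx (conj_mul_self_eq_one htt x⁻¹)).symm

end HurwitzEquiv

theorem ofFn_hurwitzMove {n : ℕ} {c : Fin n → G} {u : List G} {a b : G} {v : List G}
    (h : List.ofFn c = u ++ a :: b :: v) :
    List.ofFn (hurwitzMove u.length c) = u ++ (a * b * a⁻¹) :: a :: v := by
  have hn : n = u.length + v.length + 2 := by
    have := congrArg List.length h
    simp only [List.length_ofFn, List.length_append, List.length_cons] at this
    omega
  have hc (k : ℕ) (hk : k < n) : c ⟨k, hk⟩ = (u ++ a :: b :: v)[k]'(by simp; omega) := by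
    simp only [← h, List.getElem_ofFn]
  apply List.ext_getElem (by simp; omega)
  intro k hk _
  simp only [List.getElem_ofFn, hurwitzMove, hc, List.getElem_append]
  split_ifs <;> try omega
  · subst_vars; simp
  · subst_vars; simp
  · rfl
  · obtain ⟨j, hj⟩ : ∃ j, k - u.length = j + 2 := ⟨k - u.length - 2, by omega⟩
    simp [hj]

theorem HurwitzEquiv.exists_braid {n : ℕ} {φ : BraidGroup n →* Perm (Fin n → G)}
    (hφ : IsHurwitzAction φ) {l₁ l₂ : List G} (h : HurwitzEquiv l₁ l₂) {c : Fin n → G}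
    (hc : List.ofFn c = l₁) : ∃ β, List.ofFn (φ β c) = l₂ := by
  induction h generalizing c with
  | rel _ _ h =>
    obtain ⟨u, a, b, v⟩ := h
    have hlt : u.length + 1 < n := by
      have := congrArg List.length hc
      simp only [List.length_ofFn, List.length_append, List.length_cons] at this
      omega
    exact ⟨braidGen n u.length, by rw [hφ _ hlt]; exact ofFn_hurwitzMove hc⟩
  | refl => exact ⟨1, by simpa using hc⟩
  | symm x y hxy ih =>
    obtain ⟨c', hc'⟩ : ∃ c' : Fin n → G, List.ofFn c' = x := by
      have hlen : x.length = n := by rw [HurwitzEquiv.length_eq hxy, ← hc, List.length_ofFn]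
      subst hlen
      exact ⟨_, List.ofFn_getElem⟩
    obtain ⟨β, hβ⟩ := ih hc'
    exact ⟨β⁻¹, by simp [← List.ofFn_injective (hβ.trans hc.symm), hc']⟩
  | trans _ _ _ _ _ ih₁ ih₂ =>
    obtain ⟨β₁, hβ₁⟩ := ih₁ hc
    obtain ⟨β₂, hβ₂⟩ := ih₂ hβ₁
    exact ⟨β₂ * β₁, by rwa [map_mul, Perm.mul_apply]⟩

end Hurwitz

theorem MulAction.mem_orbit_of_le {G α : Type*} [Group G] [MulAction G α] {H K : Subgroup G}
    (hHK : H ≤ K) {a b : α} (h : b ∈ orbit H a) : b ∈ orbit K a := by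
  obtain ⟨⟨g, hg⟩, rfl⟩ := h
  exact ⟨⟨g, hHK hg⟩, rfl⟩

section Perm

variable {α : Type*}

theorem apply_eq_self_of_mem_closure {W : Set (Perm α)} {p : α} (hW : ∀ w ∈ W, w p = p)
    {g : Perm α} (hg : g ∈ Subgroup.closure W) : g p = p := by
  have : Subgroup.closure W ≤ stabilizer (Perm α) p :=
    (Subgroup.closure_le _).2 fun w hw => hW w hw
  exact this hg

theorem conj_apply_eq_self_iff {g x : Perm α} {p : α} (hg : g p = p) :
    (g * x * g⁻¹) p = p ↔ x p = p := by
  have hg' : g⁻¹ p = p := by rw [Perm.inv_eq_iff_eq, hg]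
  rw [Perm.mul_apply, Perm.mul_apply, hg']
  exact ⟨fun h => g.injective (h.trans hg.symm), fun h => by rw [h, hg]⟩

variable [DecidableEq α]

theorem Equiv.Perm.IsSwap.of_isConj {σ τ : Perm α} (hσ : σ.IsSwap) (h : IsConj σ τ) :
    τ.IsSwap := by
  obtain ⟨c, rfl⟩ := isConj_iff.1 h
  obtain ⟨x, y, hxy, rfl⟩ := hσ
  exact ⟨c x, c y, c.injective.ne hxy, (swap_apply_apply c x y).symm⟩

theorem HurwitzEquiv.forall_isSwap {l₁ l₂ : List (Perm α)} (h : HurwitzEquiv l₁ l₂)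
    (hl₁ : ∀ x ∈ l₁, x.IsSwap) : ∀ y ∈ l₂, y.IsSwap := fun _ hy =>
  let ⟨x, hx, hxy⟩ := h.exists_isConj hy
  (hl₁ x hx).of_isConj hxy

theorem Equiv.Perm.IsSwap.mul_self {σ : Perm α} (hσ : σ.IsSwap) : σ * σ = 1 := by
  obtain ⟨x, y, -, rfl⟩ := hσ
  exact swap_mul_self x y

theorem Equiv.Perm.IsSwap.eq_swap_apply_self {σ : Perm α} (hσ : σ.IsSwap) {p : α}
    (hp : σ p ≠ p) : σ = swap (σ p) p := by
  obtain ⟨x, y, -, rfl⟩ := hσ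
  rcases (swap_apply_ne_self_iff.1 hp).2 with rfl | rfl
  · rw [swap_apply_left, swap_comm]
  · rw [swap_apply_right]

theorem conj_apply_eq_self_of_isSwap {a b : Perm α} (ha : a.IsSwap) (hb : b.IsSwap) {p : α}
    (hap : a p ≠ p) (hbp : b p ≠ p) (hab : a ≠ b) : (a * b * a⁻¹) p = p := by
  have hne : a p ≠ b p := fun h => hab <| by
    rw [ha.eq_swap_apply_self hap, hb.eq_swap_apply_self hbp, h]
  rw [ha.eq_swap_apply_self hap, hb.eq_swap_apply_self hbp]
  simp [swap_apply_of_ne_of_ne hne hap]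

theorem eq_of_isSwap_of_mul_apply_eq_self {a b : Perm α} (ha : a.IsSwap) (hb : b.IsSwap)
    {p : α} (hap : a p ≠ p) (hbp : b p ≠ p) (hab : (a * b) p = p) : a = b := by
  have haa : a (a p) = p := by rw [← Perm.mul_apply, ha.mul_self, Perm.one_apply]
  have : b p = a p := a.injective (hab.trans haa.symm)
  rw [ha.eq_swap_apply_self hap, hb.eq_swap_apply_self hbp, this]

theorem exists_hurwitzEquiv_append_apply_ne_apply_eq (p : α) (l : List (Perm α)) :
    ∃ s w, HurwitzEquiv l (s ++ w) ∧ (∀ x ∈ s, x p ≠ p) ∧ (∀ x ∈ w, x p = p) ∧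
      s.length = l.countP (fun x => x p ≠ p) := by
  induction l with
  | nil => exact ⟨[], [], .refl _, by simp, by simp, rfl⟩
  | cons a l ih =>
    obtain ⟨s, w, h, hs, hw, hlen⟩ := ih
    by_cases ha : a p = p
    · refine ⟨s.map (fun x => a * x * a⁻¹), a :: w,
        (h.cons a).trans (HurwitzEquiv.cons_append_map_conj a s w), ?_, ?_, by simp [ha, hlen]⟩
      · intro x hx
        obtain ⟨y, hy, rfl⟩ := List.mem_map.1 hx
        exact (conj_apply_eq_self_iff ha).not.2 (hs y hy)
      · simpa [ha] using hw
    · exact ⟨a :: s, w, h.cons a, by simpa [ha] using hs, hw, by simp [ha, hlen]⟩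

/-- In the graph whose edges are the transpositions, `swap x top` is the only edge at `top`, so
removing it does not disconnect the other points. -/
theorem mem_orbit_closure_of_mem_orbit_closure_insert_swap {W : Set (Perm α)} {x top a b : α}
    (hW : ∀ w ∈ W, w top = top) (ha : a ≠ top) (hb : b ≠ top)
    (h : b ∈ orbit (Subgroup.closure (insert (swap x top) W)) a) :
    b ∈ orbit (Subgroup.closure W) a := by
  have hO {g : Perm α} (hg : g ∈ Subgroup.closure W) {y : α} :
      g y ∈ orbit (Subgroup.closure W) a ↔ y ∈ orbit (Subgroup.closure W) a := by
    rw [show g y = (⟨g, hg⟩ : Subgroup.closure W) • y from rfl, ← orbit_eq_iff, orbit_smul,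
      orbit_eq_iff]
  have htop : top ∉ orbit (Subgroup.closure W) a := by
    rintro ⟨⟨g, hg⟩, hga⟩
    change g a = top at hga
    exact ha (g.injective (hga.trans (apply_eq_self_of_mem_closure hW hg).symm))
  set O := orbit (Subgroup.closure W) a
  set A : Set α := {y | y ∈ O ∨ y = top ∧ x ∈ O}
  have hA : Subgroup.closure (insert (swap x top) W) ≤ stabilizer (Perm α) A := by
    rw [Subgroup.closure_le, Set.insert_subset_iff]
    refine ⟨mem_stabilizer_set.2 fun y => ?_, fun w hw => mem_stabilizer_set.2 fun y => ?_⟩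
    · rw [Perm.smul_def, swap_apply_def]
      split_ifs with h₁ h₂ <;> subst_vars <;> simp [A, htop]
    · have hwtop : w y = top ↔ y = top := by
        rw [← hW w hw, w.injective.eq_iff, hW w hw]
      simp only [A, Set.mem_ofPred_eq, Perm.smul_def, hO (Subgroup.subset_closure hw), hwtop]
  obtain ⟨⟨g, hg⟩, rfl⟩ := h
  rcases (mem_stabilizer_set.1 (hA hg) a).2 (Or.inl (mem_orbit_self a) : a ∈ A) with
    hb' | ⟨hb', -⟩
  · exact hb'
  · exact absurd hb' hb

theorem exists_hurwitzEquiv_countP_lt_of_not_isChain {p : α} {s w : List (Perm α)}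
    (hswap : ∀ x ∈ s, x.IsSwap) (hs : ∀ x ∈ s, x p ≠ p) (hw : ∀ x ∈ w, x p = p)
    (hchain : ¬ s.IsChain (· = ·)) :
    ∃ l', HurwitzEquiv (s ++ w) l' ∧ l'.countP (fun x => x p ≠ p) < s.length := by
  rw [List.isChain_iff_forall_rel_of_append_cons_cons] at hchain
  push Not at hchain
  obtain ⟨a, b, u, v, rfl, hab⟩ := hchain
  refine ⟨u ++ (a * b * a⁻¹) :: a :: (v ++ w), by simpa using HurwitzEquiv.step u a b (v ++ w), ?_⟩
  have hw0 : w.countP (fun x => x p ≠ p) = 0 := List.countP_eq_zero.2 (by simpa using hw)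
  have hmerge := conj_apply_eq_self_of_isSwap (hswap a (by simp)) (hswap b (by simp))
    (hs a (by simp)) (hs b (by simp)) hab
  have hu := List.countP_le_length (p := fun x => decide (x p ≠ p)) (l := u)
  have hv := List.countP_le_length (p := fun x => decide (x p ≠ p)) (l := v)
  have ha : a p ≠ p := hs a (by simp)
  simp only [List.countP_append, List.countP_cons, hw0, List.length_append, List.length_cons,
    decide_eq_true_eq]
  rw [if_neg (not_not.2 hmerge), if_pos ha]
  omega

theorem exists_conj_swap_eq_swap_ne {x top : α} {W : Set (Perm α)} (hx : x ≠ top)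
    (hW : ∀ w ∈ W, w top = top)
    (horbit : ¬ orbit (Subgroup.closure (insert (swap x top) W)) top ⊆ {x, top}) :
    ∃ g ∈ Subgroup.closure W, ∃ z, z ≠ x ∧ z ≠ top ∧ g * swap x top * g⁻¹ = swap z top := by
  obtain ⟨_, ⟨⟨g₀, hg₀⟩, rfl⟩, hz⟩ := Set.not_subset.1 horbit
  simp only [Set.mem_insert_iff, Set.mem_singleton_iff, not_or] at hz
  change g₀ top ≠ x ∧ g₀ top ≠ top at hz
  have hmem : g₀ * swap x top ∈ Subgroup.closure (insert (swap x top) W) :=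
    mul_mem hg₀ (Subgroup.subset_closure (Set.mem_insert _ _))
  obtain ⟨⟨g, hg⟩, hgx⟩ := mem_orbit_closure_of_mem_orbit_closure_insert_swap hW hx hz.2
    ⟨⟨_, hmem⟩, by simp [Perm.smul_def]⟩
  change g x = g₀ top at hgx
  refine ⟨g, hg, g₀ top, hz.1, hz.2, ?_⟩
  rw [← swap_apply_apply, hgx, apply_eq_self_of_mem_closure hW hg]

theorem exists_hurwitzEquiv_replicate_append_not_isChain {top : α} {t : Perm α} {n : ℕ}
    {w : List (Perm α)} (ht : t.IsSwap) (htop : t top ≠ top) (hw : ∀ x ∈ w, x top = top)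
    (hn : 3 ≤ n)
    (horbit : ∀ x, ¬ orbit (Subgroup.closure {y | y ∈ List.replicate n t ++ w}) top ⊆ {x, top}) :
    ∃ s, HurwitzEquiv (List.replicate n t ++ w) (s ++ w) ∧ (∀ y ∈ s, y.IsSwap ∧ y top ≠ top) ∧
      s.length = n ∧ ¬ s.IsChain (· = ·) := by
  obtain ⟨x, hx, rfl⟩ : ∃ x, x ≠ top ∧ t = swap x top :=
    ⟨t top, htop, ht.eq_swap_apply_self htop⟩
  have hle : Subgroup.closure {y | y ∈ List.replicate n (swap x top) ++ w} ≤
      Subgroup.closure (insert (swap x top) {y | y ∈ w}) := by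
    refine Subgroup.closure_mono fun y hy => ?_
    simp only [Set.mem_ofPred_eq, List.mem_append, List.mem_replicate] at hy
    rcases hy with ⟨-, rfl⟩ | hy
    · exact Or.inl rfl
    · exact Or.inr hy
  obtain ⟨g, hg, z, hzx, hztop, hT⟩ := exists_conj_swap_eq_swap_ne hx hw
    fun hsub => horbit x fun y hy => hsub (mem_orbit_of_le hle hy)
  obtain ⟨k, rfl⟩ : ∃ k, n = k + 3 := ⟨n - 3, by omega⟩
  have hmem : g ∈ Subgroup.closure {y | y ∈ swap x top :: List.replicate k (swap x top) ++ w} :=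
    Subgroup.closure_mono (fun _ hy => List.mem_append_right _ hy) hg
  refine ⟨swap z top :: swap z top :: swap x top :: List.replicate k (swap x top), ?_, ?_,
    by simp, ?_⟩
  · simpa [List.replicate_succ, hT] using HurwitzEquiv.pair_conj (swap_mul_self x top) hmem
  · intro y hy
    simp only [List.mem_cons, List.mem_replicate] at hy
    rcases hy with rfl | rfl | rfl | ⟨-, rfl⟩
    · exact ⟨⟨_, _, hztop, rfl⟩, by simpa using hztop⟩
    · exact ⟨⟨_, _, hztop, rfl⟩, by simpa using hztop⟩
    · exact ⟨⟨_, _, hx, rfl⟩, by simpa using hx⟩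
    · exact ⟨⟨_, _, hx, rfl⟩, by simpa using hx⟩
  · simp only [List.isChain_cons_cons]
    rintro ⟨-, hzx', -⟩
    exact hzx (by simpa using congrArg (· top) hzx')

theorem exists_hurwitzEquiv_countP_lt {top : α} {s w : List (Perm α)}
    (hswap : ∀ x ∈ s, x.IsSwap) (hs : ∀ x ∈ s, x top ≠ top) (hw : ∀ x ∈ w, x top = top)
    (hlen : 3 ≤ s.length)
    (horbit : ∀ x, ¬ orbit (Subgroup.closure {y | y ∈ s ++ w}) top ⊆ {x, top}) :
    ∃ l', HurwitzEquiv (s ++ w) l' ∧ l'.countP (fun x => x top ≠ top) < s.length := by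
  by_cases hchain : s.IsChain (· = ·)
  · obtain ⟨t, s, rfl⟩ := List.exists_cons_of_length_pos (by omega : 0 < s.length)
    rw [List.isChain_cons_eq_iff_eq_replicate] at hchain
    rw [hchain, ← List.replicate_succ] at horbit ⊢
    obtain ⟨s', h₁, hs', hlen', hchain'⟩ := exists_hurwitzEquiv_replicate_append_not_isChain
      (hswap t (by simp)) (hs t (by simp)) hw (by simpa using hlen) horbit
    obtain ⟨l', h₂, hlt⟩ := exists_hurwitzEquiv_countP_lt_of_not_isChain
      (fun y hy => (hs' y hy).1) (fun y hy => (hs' y hy).2) hw hchain'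
    exact ⟨l', h₁.trans h₂, by simpa [hlen'] using hlt⟩
  · exact exists_hurwitzEquiv_countP_lt_of_not_isChain hswap hs hw hchain

theorem exists_hurwitzEquiv_pair_cons {top : α} {l : List (Perm α)}
    (hswap : ∀ x ∈ l, x.IsSwap) (hprod : l.prod = 1)
    (horbit : ∀ x, ¬ orbit (Subgroup.closure {y | y ∈ l}) top ⊆ {x, top}) :
    ∃ t rest, HurwitzEquiv l (t :: t :: rest) ∧ t top ≠ top ∧ ∀ r ∈ rest, r top = top := by
  induction hm : l.countP (fun x => x top ≠ top) using Nat.strong_induction_on generalizing l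
    with | _ m ih =>
  obtain ⟨s, w, h, hs, hw, hlen⟩ := exists_hurwitzEquiv_append_apply_ne_apply_eq top l
  have hswap' := h.forall_isSwap hswap
  rw [h.prod_eq] at hprod
  rw [h.closure_eq] at horbit
  have hwprod : w.prod top = top := apply_eq_self_of_mem_closure hw
    (Subgroup.list_prod_mem _ fun _ hx => Subgroup.subset_closure hx)
  rcases s with _ | ⟨t₁, _ | ⟨t₂, _ | ⟨t₃, s⟩⟩⟩
  · refine absurd ?_ (horbit top)
    rintro _ ⟨⟨g, hg⟩, rfl⟩
    exact Or.inl (apply_eq_self_of_mem_closure (by simpa using hw) hg)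
  · refine absurd ?_ (hs t₁ (by simp))
    simpa [hwprod] using congrArg (· top) hprod
  · have h₁₂ : t₁ = t₂ := eq_of_isSwap_of_mul_apply_eq_self (hswap' t₁ (by simp))
      (hswap' t₂ (by simp)) (hs t₁ (by simp)) (hs t₂ (by simp))
      (by simpa [hwprod] using congrArg (· top) hprod)
    subst h₁₂
    exact ⟨t₁, w, h, hs t₁ (by simp), hw⟩
  · obtain ⟨l', h', hlt⟩ := exists_hurwitzEquiv_countP_lt (s := t₁ :: t₂ :: t₃ :: s)
      (fun x hx => hswap' x (List.mem_append_left _ hx)) hs hw (by simp) horbit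
    obtain ⟨t, rest, h'', ht, hrest⟩ := ih _ (hm ▸ hlen ▸ hlt) (h'.forall_isSwap hswap')
      (h'.prod_eq ▸ hprod) (h'.closure_eq ▸ horbit) rfl
    exact ⟨t, rest, h.trans (h'.trans h''), ht, hrest⟩

end Perm

section Standard

/-- Entry `i` of the standard tuple of degree `e`, on the first `e` points of `Fin d`. -/
def stdEntry (d e i : ℕ) [NeZero d] : Perm (Fin d) :=
  if i + 4 ≤ 2 * e then swap (Fin.ofNat d (e - 2 - i / 2)) (Fin.ofNat d (e - 1 - i / 2))
  else swap (Fin.ofNat d 0) (Fin.ofNat d 1)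

def stdList (d e m : ℕ) [NeZero d] : List (Perm (Fin d)) :=
  List.ofFn fun i : Fin m => stdEntry d e i

variable {d : ℕ}

/-- Monodromy of a connected simply branched cover of `S²` of degree `e`, acting on the points
`0, …, e - 1` of `Fin d`. -/
structure IsSimpleBranchData (e : ℕ) (l : List (Perm (Fin d))) : Prop where
  isSwap : ∀ x ∈ l, x.IsSwap
  closure_le :
    Subgroup.closure {x | x ∈ l} ≤ fixingSubgroup (Perm (Fin d)) {p : Fin d | e ≤ (p : ℕ)}
  prod_eq_one : l.prod = 1
  transitive : ∀ a b : Fin d, (a : ℕ) < e → (b : ℕ) < e →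
    b ∈ orbit (Subgroup.closure {x | x ∈ l}) a

theorem IsSimpleBranchData.of_hurwitzEquiv {e : ℕ} {l₁ l₂ : List (Perm (Fin d))}
    (hl : IsSimpleBranchData e l₁) (h : HurwitzEquiv l₁ l₂) : IsSimpleBranchData e l₂ where
  isSwap := h.forall_isSwap hl.isSwap
  closure_le := h.closure_eq ▸ hl.closure_le
  prod_eq_one := h.prod_eq ▸ hl.prod_eq_one
  transitive := h.closure_eq ▸ hl.transitive

theorem IsSimpleBranchData.apply_eq_self {e : ℕ} {l : List (Perm (Fin d))}
    (hl : IsSimpleBranchData e l) {x : Perm (Fin d)} (hx : x ∈ l) {p : Fin d}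
    (hp : e ≤ (p : ℕ)) : x p = p :=
  (mem_fixingSubgroup_iff _).1 (hl.closure_le (Subgroup.subset_closure hx)) p hp

theorem IsSimpleBranchData.lt_of_apply_ne {e : ℕ} {l : List (Perm (Fin d))}
    (hl : IsSimpleBranchData e l) {x : Perm (Fin d)} (hx : x ∈ l) {p : Fin d} (hp : x p ≠ p) :
    (p : ℕ) < e :=
  Nat.lt_of_not_le fun h => hp (hl.apply_eq_self hx h)

theorem IsSimpleBranchData.not_orbit_subset {e : ℕ} (he : 3 ≤ e) (hed : e ≤ d)
    {l : List (Perm (Fin d))} (hl : IsSimpleBranchData e l) {top : Fin d} (htop : (top : ℕ) < e)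
    (x : Fin d) : ¬ orbit (Subgroup.closure {y | y ∈ l}) top ⊆ {x, top} := by
  intro hsub
  have h₀ := hsub (hl.transitive top ⟨0, by omega⟩ htop (by simp; omega))
  have h₁ := hsub (hl.transitive top ⟨1, by omega⟩ htop (by simp; omega))
  have h₂ := hsub (hl.transitive top ⟨2, by omega⟩ htop (by simp; omega))
  simp only [Set.mem_insert_iff, Set.mem_singleton_iff, Fin.ext_iff] at h₀ h₁ h₂
  omega

theorem IsSimpleBranchData.of_pair_cons {e : ℕ} {top : Fin d} (htop : (top : ℕ) = e)
    {t : Perm (Fin d)} {rest : List (Perm (Fin d))}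
    (hl : IsSimpleBranchData (e + 1) (t :: t :: rest))
    (ht : t top ≠ top) (hrest : ∀ r ∈ rest, r top = top) : IsSimpleBranchData e rest := by
  have htswap := hl.isSwap t (by simp)
  refine ⟨fun r hr => hl.isSwap r (by simp [hr]), (Subgroup.closure_le _).2 fun r hr =>
    (mem_fixingSubgroup_iff _).2 fun p hp => ?_, ?_, fun a b ha hb => ?_⟩
  · by_cases hpe : (p : ℕ) = e
    · exact (Fin.ext (hpe.trans htop.symm) : p = top) ▸ hrest r hr
    · exact hl.apply_eq_self (x := r) (List.mem_cons_of_mem _ (List.mem_cons_of_mem _ hr))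
        (by simp only [Set.mem_ofPred_eq] at hp; omega)
  · simpa [← mul_assoc, htswap.mul_self] using hl.prod_eq_one
  · have hle : Subgroup.closure {y | y ∈ t :: t :: rest} ≤
        Subgroup.closure (insert (swap (t top) top) {y | y ∈ rest}) := by
      refine Subgroup.closure_mono fun y hy => ?_
      simp only [Set.mem_ofPred_eq, List.mem_cons] at hy
      rcases hy with rfl | rfl | hy
      · exact Or.inl (htswap.eq_swap_apply_self ht)
      · exact Or.inl (htswap.eq_swap_apply_self ht)
      · exact Or.inr hy
    exact mem_orbit_closure_of_mem_orbit_closure_insert_swap hrest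
      (fun h => by simp [h, htop] at ha) (fun h => by simp [h, htop] at hb)
      (mem_orbit_of_le hle (hl.transitive a b (by omega) (by omega)))

variable [NeZero d]

theorem stdList_two (m : ℕ) :
    stdList d 2 m = List.replicate m (swap (Fin.ofNat d 0) (Fin.ofNat d 1)) := by
  refine List.eq_replicate_iff.2 ⟨by simp [stdList], fun b hb => ?_⟩
  obtain ⟨i, rfl⟩ := List.mem_ofFn.1 hb
  unfold stdEntry
  split_ifs with hi
  · rw [show (i : ℕ) / 2 = 0 by omega]
  · rfl

theorem stdList_succ_add_two {e : ℕ} (he : 2 ≤ e) (m : ℕ) :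
    stdList d (e + 1) (m + 2) = swap (Fin.ofNat d (e - 1)) (Fin.ofNat d e) ::
      swap (Fin.ofNat d (e - 1)) (Fin.ofNat d e) :: stdList d e m := by
  simp only [stdList, List.ofFn_succ, Fin.val_zero, Fin.val_succ]
  refine congr_arg₂ _ ?_ (congr_arg₂ _ ?_ (congrArg _ (funext fun i => ?_))) <;> unfold stdEntry
  all_goals split_ifs <;> first | omega | (congr 2 <;> omega)

theorem ofFn_stdTuple {n : ℕ} (hd : 2 ≤ d) : List.ofFn (stdTuple d n) = stdList d d n := by
  refine congrArg _ (funext fun i => ?_)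
  unfold stdTuple stdEntry
  split_ifs <;> congr 1 <;> ext <;> rw [Fin.val_ofNat, Nat.mod_eq_of_lt (by omega)]

theorem IsSimpleBranchData.eq_stdList_two {l : List (Perm (Fin d))} (hd : 2 ≤ d)
    (hl : IsSimpleBranchData 2 l) : l = stdList d 2 l.length := by
  rw [stdList_two]
  refine List.eq_replicate_iff.2 ⟨rfl, fun x hx => ?_⟩
  obtain ⟨a, b, hab, rfl⟩ := hl.isSwap x hx
  have ha := hl.lt_of_apply_ne hx (p := a) (by simpa using hab.symm)
  have hb := hl.lt_of_apply_ne hx (p := b) (by simpa using hab)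
  obtain ⟨ha0, hb1⟩ | ⟨ha1, hb0⟩ : (a : ℕ) = 0 ∧ (b : ℕ) = 1 ∨ (a : ℕ) = 1 ∧ (b : ℕ) = 0 := by
    have := Fin.val_ne_of_ne hab
    omega
  · congr 1 <;> ext <;> simp [ha0, hb1, Nat.mod_eq_of_lt (show 1 < d by omega)]
  · rw [swap_comm]
    congr 1 <;> ext <;> simp [ha1, hb0, Nat.mod_eq_of_lt (show 1 < d by omega)]

theorem IsSimpleBranchData.exists_hurwitzEquiv_std_pair_cons {e : ℕ} (he : 2 ≤ e)
    (hed : e < d) {l : List (Perm (Fin d))} (hl : IsSimpleBranchData (e + 1) l) :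
    ∃ rest, HurwitzEquiv l (swap (Fin.ofNat d (e - 1)) (Fin.ofNat d e) ::
      swap (Fin.ofNat d (e - 1)) (Fin.ofNat d e) :: rest) ∧ IsSimpleBranchData e rest := by
  have hval {k : ℕ} (hk : k < d) : (Fin.ofNat d k : ℕ) = k := by
    rw [Fin.val_ofNat, Nat.mod_eq_of_lt hk]
  set top := Fin.ofNat d e
  have htop : (top : ℕ) = e := hval hed
  obtain ⟨t, rest, h, ht, hrest⟩ := exists_hurwitzEquiv_pair_cons hl.isSwap hl.prod_eq_one
    (hl.not_orbit_subset (by omega) hed (top := top) (by omega))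
  have hl' := hl.of_hurwitzEquiv h
  have htswap := hl'.isSwap t (by simp)
  have hx : (t top : ℕ) < e := by
    have htt : t (t top) ≠ t top := by
      rw [← Perm.mul_apply, htswap.mul_self, Perm.one_apply]
      exact ht.symm
    have := hl'.lt_of_apply_ne (by simp) htt
    have : (t top : ℕ) ≠ e := fun h => ht (Fin.ext (h.trans htop.symm))
    omega
  have hrest' := hl'.of_pair_cons htop ht hrest
  obtain ⟨⟨g, hg⟩, hgx⟩ := hrest'.transitive (t top) (Fin.ofNat d (e - 1)) hx
    (by rw [hval] <;> omega)
  change g (t top) = _ at hgx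
  have hT : g * t * g⁻¹ = swap (Fin.ofNat d (e - 1)) top := by
    rw [← hgx, ← apply_eq_self_of_mem_closure hrest hg, swap_apply_apply,
      apply_eq_self_of_mem_closure hrest hg, ← htswap.eq_swap_apply_self ht]
  exact ⟨rest, hT ▸ h.trans (HurwitzEquiv.pair_conj htswap.mul_self hg), hrest'⟩

theorem IsSimpleBranchData.hurwitzEquiv_stdList {e : ℕ} (he : 2 ≤ e) (hed : e ≤ d)
    {l : List (Perm (Fin d))} (hl : IsSimpleBranchData e l) :
    HurwitzEquiv l (stdList d e l.length) := by
  induction e, he using Nat.le_induction generalizing l with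
  | base => rw [← hl.eq_stdList_two hed]
  | succ e he ih =>
    obtain ⟨rest, h, hrest⟩ := hl.exists_hurwitzEquiv_std_pair_cons he (by omega)
    rw [h.length_eq, List.length_cons, List.length_cons, stdList_succ_add_two he]
    exact h.trans (((ih (by omega) hrest).cons _).cons _)

end Standard

theorem hurwitz_orbit_std_of_trivial_product_general (d n : ℕ) (hd : 2 ≤ d)
    (c : Fin n → Equiv.Perm (Fin d)) (hc : ∀ i, (c i).IsSwap)
    (htrans : ∀ a b : Fin d, ∃ g ∈ Subgroup.closure (Set.range c), g a = b)
    (hprod : (List.ofFn c).prod = 1)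
    (φ : BraidGroup n →* Equiv.Perm (Fin n → Equiv.Perm (Fin d)))
    (hφ : IsHurwitzAction φ) :
    ∃ (g : Equiv.Perm (Fin d)) (β : BraidGroup n),
      φ β (fun k => g * c k * g⁻¹) = stdTuple d n := by
  have : NeZero d := ⟨by omega⟩
  have hrange : Set.range c = {x | x ∈ List.ofFn c} := by ext; simp [List.mem_ofFn]
  have hl : IsSimpleBranchData d (List.ofFn c) :=
    { isSwap := by simpa [List.mem_ofFn] using hc
      closure_le := fun _ _ => (mem_fixingSubgroup_iff _).2 fun p hp => absurd hp (not_le.2 p.isLt)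
      prod_eq_one := hprod
      transitive := fun a b _ _ =>
        let ⟨g, hg, hab⟩ := htrans a b
        ⟨⟨g, hrange ▸ hg⟩, hab⟩ }
  obtain ⟨β, hβ⟩ := (hl.hurwitzEquiv_stdList hd le_rfl).exists_braid hφ rfl
  refine ⟨1, β, List.ofFn_injective ?_⟩
  simpa [ofFn_stdTuple hd] using hβ

/-- For fixed degree and (even) number of branch points there is a unique
connected simple branched cover of `S²`: any tuple of transpositions generating
a transitive subgroup with trivial product can be brought to the standard tuple
by a global conjugation followed by the Hurwitz action of a braid. -/
theorem hurwitz_orbit_std_of_trivial_product (d n : ℕ) (hd : 2 ≤ d)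
    (hn : 2 * d - 2 ≤ n) (hne : Even n)
    (c : Fin n → Equiv.Perm (Fin d)) (hc : ∀ i, (c i).IsSwap)
    (htrans : ∀ a b : Fin d, ∃ g ∈ Subgroup.closure (Set.range c), g a = b)
    (hprod : (List.ofFn c).prod = 1)
    (φ : BraidGroup n →* Equiv.Perm (Fin n → Equiv.Perm (Fin d)))
    (hφ : IsHurwitzAction φ) :
    ∃ (g : Equiv.Perm (Fin d)) (β : BraidGroup n),
      φ β (fun k => g * c k * g⁻¹) = stdTuple d n :=
  hurwitz_orbit_std_of_trivial_product_general d n hd c hc htrans hprod φ hφ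
end

section
/- Let d ≥ 3 and n ≥ 2d−2 be integers and let c⁰ ∈ (S_d)^n be the standard tuple. Then: (a) h_i(c⁰) = c⁰ for every index i with 0 ≤ i ≤ n−2 such that i is even or i ≥ 2d−4; (b) for every odd index i with i < 2d−4, one has h_i³(c⁰) = c⁰, while h_i(c⁰) ≠ c⁰ and h_i²(c⁰) ≠ c⁰. (That is, with respect to the standard coloring, the half-twist x_i is liftable, i.e. Type 1, when i ≥ 2d−4 or i is even, and is Type 3 with minimal liftable power 3 when i is odd and i < 2d−4.) -/
section Hurwitz

variable {G : Type*} [Group G]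

def hurwitzPairMove (p : G × G) : G × G := (p.1 * p.2 * p.1⁻¹, p.1)

theorem hurwitzPairMove_eq_self_iff {a b : G} : hurwitzPairMove (a, b) = (a, b) ↔ a = b := by
  simp only [hurwitzPairMove, Prod.mk.injEq]
  constructor
  · exact And.right
  · rintro rfl
    simp

theorem hurwitzPairMove_iterate_two_eq_self_iff {a b : G} :
    hurwitzPairMove^[2] (a, b) = (a, b) ↔ Commute a b := by
  have hconj : a * b * a⁻¹ = b ↔ Commute a b := mul_inv_eq_iff_eq_mul
  show hurwitzPairMove (a * b * a⁻¹, a) = (a, b) ↔ _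
  simp only [hurwitzPairMove, Prod.mk.injEq, ← hconj]
  constructor
  · exact And.right
  · intro h
    refine ⟨?_, h⟩
    rw [h]
    exact mul_inv_eq_of_eq_mul (hconj.mp h).symm.eq

theorem hurwitzPairMove_iterate_three_eq_self_of_braid {a b : G} (h : a * b * a = b * a * b) :
    hurwitzPairMove^[3] (a, b) = (a, b) := by
  have h2 : hurwitzPairMove (a * b * a⁻¹, a) = (b, a * b * a⁻¹) := by
    refine Prod.ext ?_ rfl
    calc a * b * a⁻¹ * a * (a * b * a⁻¹)⁻¹ = a * b * a * b⁻¹ * a⁻¹ := by group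
      _ = b := by rw [h]; group
  have h3 : hurwitzPairMove (b, a * b * a⁻¹) = (a, b) := by
    refine Prod.ext ?_ rfl
    calc b * (a * b * a⁻¹) * b⁻¹ = b * a * b * a⁻¹ * b⁻¹ := by group
      _ = a := by rw [← h]; group
  show hurwitzPairMove (hurwitzPairMove (a * b * a⁻¹, a)) = (a, b)
  rw [h2, h3]

theorem hurwitzMove_apply {n i : ℕ} (hi : i + 1 < n) (c : Fin n → G) (k : Fin n) :
    hurwitzMove i c k =
      if (k : ℕ) = i then (hurwitzPairMove (c ⟨i, by omega⟩, c ⟨i + 1, hi⟩)).1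
      else if (k : ℕ) = i + 1 then (hurwitzPairMove (c ⟨i, by omega⟩, c ⟨i + 1, hi⟩)).2
      else c k := by
  simp only [hurwitzMove, dif_pos hi, dite_eq_ite]
  rfl

theorem hurwitzMove_iterate_apply {n i : ℕ} (hi : i + 1 < n) (c : Fin n → G) (m : ℕ)
    (k : Fin n) :
    (hurwitzMove i)^[m] c k =
      if (k : ℕ) = i then (hurwitzPairMove^[m] (c ⟨i, by omega⟩, c ⟨i + 1, hi⟩)).1
      else if (k : ℕ) = i + 1 then (hurwitzPairMove^[m] (c ⟨i, by omega⟩, c ⟨i + 1, hi⟩)).2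
      else c k := by
  induction m generalizing k with
  | zero =>
    obtain ⟨k, hk⟩ := k
    split_ifs <;> subst_vars <;> rfl
  | succ m ih =>
    simp only [Function.iterate_succ_apply', hurwitzMove_apply hi, ih]
    split_ifs <;> first | omega | rfl

theorem hurwitzMove_iterate_eq_self_iff {n i : ℕ} (hi : i + 1 < n) (c : Fin n → G) (m : ℕ) :
    (hurwitzMove i)^[m] c = c ↔
      hurwitzPairMove^[m] (c ⟨i, by omega⟩, c ⟨i + 1, hi⟩) =
        (c ⟨i, by omega⟩, c ⟨i + 1, hi⟩) := by
  constructor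
  · intro h
    have h₁ := congrFun h ⟨i, by omega⟩
    have h₂ := congrFun h ⟨i + 1, hi⟩
    simp only [hurwitzMove_iterate_apply hi, ↓reduceIte, Nat.add_eq_left, one_ne_zero] at h₁ h₂
    exact Prod.ext h₁ h₂
  · intro h
    funext k
    rw [hurwitzMove_iterate_apply hi, h]
    obtain ⟨k, hk⟩ := k
    split_ifs <;> subst_vars <;> rfl

theorem hurwitzMove_eq_self_iff {n i : ℕ} (hi : i + 1 < n) (c : Fin n → G) :
    hurwitzMove i c = c ↔ c ⟨i, by omega⟩ = c ⟨i + 1, hi⟩ :=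
  (hurwitzMove_iterate_eq_self_iff hi c 1).trans hurwitzPairMove_eq_self_iff

theorem hurwitzMove_iterate_two_eq_self_iff {n i : ℕ} (hi : i + 1 < n) (c : Fin n → G) :
    (hurwitzMove i)^[2] c = c ↔ Commute (c ⟨i, by omega⟩) (c ⟨i + 1, hi⟩) := by
  rw [hurwitzMove_iterate_eq_self_iff hi, hurwitzPairMove_iterate_two_eq_self_iff]

theorem hurwitzMove_iterate_three_eq_self_of_braid {n i : ℕ} (hi : i + 1 < n) (c : Fin n → G)
    (h : c ⟨i, by omega⟩ * c ⟨i + 1, hi⟩ * c ⟨i, by omega⟩ =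
      c ⟨i + 1, hi⟩ * c ⟨i, by omega⟩ * c ⟨i + 1, hi⟩) :
    (hurwitzMove i)^[3] c = c :=
  (hurwitzMove_iterate_eq_self_iff hi c 3).mpr (hurwitzPairMove_iterate_three_eq_self_of_braid h)

end Hurwitz

section Swap

open Equiv

variable {α : Type*} [DecidableEq α] {x y z : α}

theorem Equiv.swap_ne_swap_of_ne (hyz : y ≠ z) (hxz : x ≠ z) : swap y z ≠ swap x y := by
  intro h
  have := congrArg (· z) h
  simp only [swap_apply_right, swap_apply_of_ne_of_ne hxz.symm hyz.symm] at this
  exact hyz this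

theorem Equiv.not_commute_swap_swap (hxy : x ≠ y) (hyz : y ≠ z) (hxz : x ≠ z) :
    ¬Commute (swap y z) (swap x y) := by
  intro h
  have := congrArg (· x) h.eq
  simp only [Perm.mul_apply, swap_apply_left, swap_apply_of_ne_of_ne hxy hxz] at this
  exact hyz this.symm

theorem Equiv.swap_mul_swap_mul_swap_eq_swap_mul_swap_mul_swap (hxy : x ≠ y) (hyz : y ≠ z)
    (hxz : x ≠ z) : swap y z * swap x y * swap y z = swap x y * swap y z * swap x y := by
  rw [swap_mul_swap_mul_swap hxy hxz, swap_comm x y, swap_comm y z,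
    swap_mul_swap_mul_swap hyz.symm hxz.symm, swap_comm]

end Swap

-- `c⁰_i` swaps the points `d - 2 - k` and `d - 1 - k` of `Fin d`, where `k = min ⌊i/2⌋ (d - 2)`.
theorem stdTuple_eq_of_min_eq {d n : ℕ} (i j : Fin n)
    (h : min ((i : ℕ) / 2) (d - 2) = min ((j : ℕ) / 2) (d - 2)) :
    stdTuple d n i = stdTuple d n j := by
  unfold stdTuple
  split_ifs <;> first | rfl | omega | (congr 1 <;> exact Fin.ext (by simp only; omega))

theorem exists_stdTuple_eq_swap_of_odd {d n i : ℕ} (hi : i + 1 < n) (hodd : i % 2 = 1)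
    (hlt : i < 2 * d - 4) :
    ∃ x y z : Fin d, x ≠ y ∧ y ≠ z ∧ x ≠ z ∧
      stdTuple d n ⟨i, by omega⟩ = Equiv.swap y z ∧
        stdTuple d n ⟨i + 1, hi⟩ = Equiv.swap x y := by
  refine ⟨⟨d - 3 - i / 2, by omega⟩, ⟨d - 2 - i / 2, by omega⟩, ⟨d - 1 - i / 2, by omega⟩,
    by simp only [ne_eq, Fin.mk.injEq]; omega, by simp only [ne_eq, Fin.mk.injEq]; omega,
    by simp only [ne_eq, Fin.mk.injEq]; omega, dif_pos (by simp only; omega), ?_⟩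
  rw [stdTuple, dif_pos (by simp only; omega)]
  congr 1 <;> exact Fin.ext (by simp only; omega)

theorem hurwitzMove_type_on_stdTuple_general (d n : ℕ) :
    (∀ i : ℕ, i + 1 < n → (i % 2 = 0 ∨ 2 * d - 4 ≤ i) →
      hurwitzMove i (stdTuple d n) = stdTuple d n) ∧
    (∀ i : ℕ, i + 1 < n → i % 2 = 1 → i < 2 * d - 4 →
      (hurwitzMove i)^[3] (stdTuple d n) = stdTuple d n ∧
      hurwitzMove i (stdTuple d n) ≠ stdTuple d n ∧
      (hurwitzMove i)^[2] (stdTuple d n) ≠ stdTuple d n) := by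
  refine ⟨fun i hi hfix => ?_, fun i hi hodd hlt => ?_⟩
  · exact (hurwitzMove_eq_self_iff hi _).mpr (stdTuple_eq_of_min_eq _ _ (by simp only; omega))
  · obtain ⟨x, y, z, hxy, hyz, hxz, hc, hc'⟩ :=
      exists_stdTuple_eq_swap_of_odd (n := n) hi hodd hlt
    refine ⟨hurwitzMove_iterate_three_eq_self_of_braid hi _ ?_,
      (hurwitzMove_eq_self_iff hi _).not.mpr ?_,
      (hurwitzMove_iterate_two_eq_self_iff hi _).not.mpr ?_⟩ <;> rw [hc, hc']
    · exact Equiv.swap_mul_swap_mul_swap_eq_swap_mul_swap_mul_swap hxy hyz hxz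
    · exact Equiv.swap_ne_swap_of_ne hyz hxz
    · exact Equiv.not_commute_swap_swap hxy hyz hxz

/-- With respect to the standard coloring, the elementary half-twist `x_i` is
liftable (Type 1) when `i` is even or `i ≥ 2d-4`, and is Type 3 — with minimal
positive liftable power `3` — when `i` is odd and `i < 2d-4`. -/
theorem hurwitzMove_type_on_stdTuple (d n : ℕ) (hd : 3 ≤ d) (hn : 2 * d - 2 ≤ n) :
    (∀ i : ℕ, i + 1 < n → (i % 2 = 0 ∨ 2 * d - 4 ≤ i) →
      hurwitzMove i (stdTuple d n) = stdTuple d n) ∧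
    (∀ i : ℕ, i + 1 < n → i % 2 = 1 → i < 2 * d - 4 →
      (hurwitzMove i)^[3] (stdTuple d n) = stdTuple d n ∧
      hurwitzMove i (stdTuple d n) ≠ stdTuple d n ∧
      (hurwitzMove i)^[2] (stdTuple d n) ≠ stdTuple d n) :=
  hurwitzMove_type_on_stdTuple_general d n
end

section
/- Let d ≥ 3 and n ≥ 2d−2 be integers, and let i, j be indices with i odd, j − i odd, j − i ≥ 3, and j ≤ 2d−4. Define y_{i,j} = σ_{j−1} σ_{j−2} ⋯ σ_{i+1} · σ_i · σ_{i+1}⁻¹ σ_{i+2}⁻¹ ⋯ σ_{j−1}⁻¹ ∈ B_n (the half-twist about the arc from the i-th to the j-th marked point passing in front of the intermediate marked points). Then, under the Hurwitz action on (S_d)^n, y_{i,j}² · c⁰ = c⁰ while y_{i,j} · c⁰ ≠ c⁰. (That is, y_{i,j} is Type 2 with respect to the standard coloring, so its square is liftable.) -/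
/-- The braid `y_{i,j} = σ_{j-1} σ_{j-2} ⋯ σ_{i+1} · σ_i · σ_{i+1}⁻¹ σ_{i+2}⁻¹ ⋯ σ_{j-1}⁻¹`,
the half-twist about the arc from the `i`-th to the `j`-th marked point passing
in front of the intermediate marked points. -/
def yBraid (n i j : ℕ) : BraidGroup n :=
  ((List.range (j - 1 - i)).map (fun t => braidGen n (j - 1 - t))).prod *
    braidGen n i *
    ((List.range (j - 1 - i)).map (fun t => (braidGen n (i + 1 + t))⁻¹)).prod

/-!
Induction on `j`, via `y_{i,j+1} = σ_j y_{i,j} σ_j⁻¹`, shows that `y_{i,j}` acts on a tuple by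
`cᵢ ↦ cᵢ cⱼ cᵢ⁻¹`, `cⱼ ↦ cᵢ`, conjugating the entries strictly between by `cᵢ cⱼ⁻¹` and fixing
the others. When `cᵢ` and `cⱼ` commute this move is an involution, and it moves the tuple as soon
as `cᵢ ≠ cⱼ`. For `i` odd and `j` even with `j ≥ i + 3`, the entries `c⁰ᵢ` and `c⁰ⱼ` of the
standard tuple are the transpositions `(d-1-⌊i/2⌋, d-⌊i/2⌋)` and `(d-1-j/2, d-j/2)`,
which are disjoint because `j/2 ≥ ⌊i/2⌋ + 2`.
-/

section HalfTwist

variable {G : Type*} [Group G] {n : ℕ}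

-- Entries are indexed by `ℕ` (with junk value `1` past the end) so that the moves below need
-- no bound proofs.
def tupleEntry (c : Fin n → G) (m : ℕ) : G := if h : m < n then c ⟨m, h⟩ else 1

lemma tupleEntry_of_lt (c : Fin n → G) {m : ℕ} (h : m < n) : tupleEntry c m = c ⟨m, h⟩ :=
  dif_pos h

def halfTwistMove (i j : ℕ) (c : Fin n → G) : Fin n → G := fun k =>
  if (k : ℕ) = i then tupleEntry c i * tupleEntry c j * (tupleEntry c i)⁻¹
  else if (k : ℕ) = j then tupleEntry c i
  else if i < k ∧ k < j then
    tupleEntry c i * (tupleEntry c j)⁻¹ * c k * (tupleEntry c i * (tupleEntry c j)⁻¹)⁻¹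
  else c k

def hurwitzMoveInv (i : ℕ) (c : Fin n → G) : Fin n → G := fun k =>
  if (k : ℕ) = i then tupleEntry c (i + 1)
  else if (k : ℕ) = i + 1 then (tupleEntry c (i + 1))⁻¹ * tupleEntry c i * tupleEntry c (i + 1)
  else c k

lemma hurwitzMove_hurwitzMoveInv {i : ℕ} (hi : i + 1 < n) (c : Fin n → G) :
    hurwitzMove i (hurwitzMoveInv i c) = c := by
  funext ⟨k, hk⟩
  simp only [hurwitzMove, hurwitzMoveInv, tupleEntry]
  split_ifs <;> simp_all <;> first | omega | group

lemma hurwitzMove_eq_halfTwistMove {i : ℕ} (hi : i + 1 < n) (c : Fin n → G) :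
    hurwitzMove i c = halfTwistMove i (i + 1) c := by
  funext ⟨k, hk⟩
  simp only [hurwitzMove, halfTwistMove, tupleEntry]
  split_ifs <;> simp_all <;> omega

lemma tupleEntry_hurwitzMoveInv_self {i : ℕ} (hi : i < n) (c : Fin n → G) :
    tupleEntry (hurwitzMoveInv i c) i = tupleEntry c (i + 1) := by
  simp [tupleEntry_of_lt _ hi, hurwitzMoveInv]

lemma tupleEntry_hurwitzMoveInv_of_ne {i m : ℕ} (c : Fin n → G) (h₁ : m ≠ i) (h₂ : m ≠ i + 1) :
    tupleEntry (hurwitzMoveInv i c) m = tupleEntry c m := by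
  unfold tupleEntry
  split_ifs <;> simp [hurwitzMoveInv, *]

lemma tupleEntry_halfTwistMove_right {i j : ℕ} (hij : i < j) (hj : j < n) (c : Fin n → G) :
    tupleEntry (halfTwistMove i j c) j = tupleEntry c i := by
  simp [tupleEntry_of_lt _ hj, halfTwistMove, hij.ne']

lemma tupleEntry_halfTwistMove_of_gt {i j m : ℕ} (hij : i < j) (hjm : j < m) (c : Fin n → G) :
    tupleEntry (halfTwistMove i j c) m = tupleEntry c m := by
  unfold tupleEntry
  split_ifs with h
  · simp only [halfTwistMove]
    rw [if_neg (by omega), if_neg (by omega), if_neg (by omega)]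
  · rfl

lemma hurwitzMove_halfTwistMove_hurwitzMoveInv {i j : ℕ} (hij : i < j) (hj : j + 1 < n)
    (c : Fin n → G) :
    hurwitzMove j (halfTwistMove i j (hurwitzMoveInv j c)) = halfTwistMove i (j + 1) c := by
  have hci : tupleEntry (hurwitzMoveInv j c) i = tupleEntry c i :=
    tupleEntry_hurwitzMoveInv_of_ne c hij.ne (by omega)
  have hcj : tupleEntry (hurwitzMoveInv j c) j = tupleEntry c (j + 1) :=
    tupleEntry_hurwitzMoveInv_self (by omega) c
  have hcj₁ : tupleEntry (hurwitzMoveInv j c) (j + 1) =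
      (tupleEntry c (j + 1))⁻¹ * tupleEntry c j * tupleEntry c (j + 1) := by
    simp [tupleEntry_of_lt _ hj, hurwitzMoveInv]
  funext ⟨k, hk⟩
  simp only [hurwitzMove, dif_pos hj, ← tupleEntry_of_lt,
    tupleEntry_halfTwistMove_right hij (by omega : j < n),
    tupleEntry_halfTwistMove_of_gt hij (Nat.lt_succ_self j), hcj₁]
  rw [tupleEntry_of_lt _ hk, tupleEntry_of_lt _ hk]
  simp only [halfTwistMove, hci, hcj, hurwitzMoveInv]
  split_ifs <;> first | omega | (subst_vars; simp_all [← tupleEntry_of_lt]; try group)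

lemma halfTwistMove_halfTwistMove {i j : ℕ} (hij : i < j) (hj : j < n) (c : Fin n → G)
    (hc : Commute (tupleEntry c i) (tupleEntry c j)) :
    halfTwistMove i j (halfTwistMove i j c) = c := by
  have hci : tupleEntry (halfTwistMove i j c) i = tupleEntry c j := by
    rw [tupleEntry_of_lt _ (hij.trans hj)]
    simp only [halfTwistMove, if_true, hc.eq, mul_inv_cancel_right]
  funext ⟨k, hk⟩
  simp only [halfTwistMove, hci, tupleEntry_halfTwistMove_right hij hj]
  split_ifs <;> first
    | omega
    | (subst_vars; simp_all [← tupleEntry_of_lt, mul_inv_eq_iff_eq_mul, hc.eq]; try group)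

lemma halfTwistMove_ne {i j : ℕ} (hij : i < j) (hj : j < n) (c : Fin n → G)
    (hc : tupleEntry c i ≠ tupleEntry c j) : halfTwistMove i j c ≠ c := by
  intro h
  have hi := congrFun h ⟨i, hij.trans hj⟩
  simp only [halfTwistMove, if_true, ← tupleEntry_of_lt] at hi
  exact hc (mul_left_cancel (mul_inv_eq_iff_eq_mul.mp hi)).symm

end HalfTwist

lemma yBraid_succ_self (n i : ℕ) : yBraid n i (i + 1) = braidGen n i := by
  simp [yBraid]

lemma yBraid_succ {n i j : ℕ} (hij : i < j) :
    yBraid n i (j + 1) = braidGen n j * yBraid n i j * (braidGen n j)⁻¹ := by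
  obtain ⟨m, rfl⟩ : ∃ m, j = i + 1 + m := ⟨j - (i + 1), by omega⟩
  have h₁ : i + 1 + m + 1 - 1 - i = m + 1 := by omega
  have h₂ : i + 1 + m - 1 - i = m := by omega
  rw [yBraid, yBraid, h₁, h₂, List.prod_range_succ', List.prod_range_succ]
  have h₃ : ∀ t, i + 1 + m - (t + 1) = i + m - t := fun t => by omega
  simp only [Nat.succ_eq_add_one, Nat.add_sub_cancel, Nat.sub_zero, h₃, mul_assoc]

namespace IsHurwitzAction

variable {G : Type*} [Group G] {n : ℕ} {φ : BraidGroup n →* Equiv.Perm (Fin n → G)}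

lemma inv_apply (hφ : IsHurwitzAction φ) {i : ℕ} (hi : i + 1 < n) (c : Fin n → G) :
    (φ (braidGen n i))⁻¹ c = hurwitzMoveInv i c := by
  rw [Equiv.Perm.inv_eq_iff_eq, hφ i hi, hurwitzMove_hurwitzMoveInv hi]

lemma yBraid_apply (hφ : IsHurwitzAction φ) {i j : ℕ} (hij : i < j) (hj : j < n)
    (c : Fin n → G) : φ (yBraid n i j) c = halfTwistMove i j c := by
  induction j, hij using Nat.le_induction generalizing c with
  | base => rw [yBraid_succ_self, hφ i hj, hurwitzMove_eq_halfTwistMove hj]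
  | succ j hij ih =>
    rw [yBraid_succ hij, map_mul, map_mul, map_inv, Equiv.Perm.mul_apply, Equiv.Perm.mul_apply,
      inv_apply hφ hj, ih (by omega), hφ j hj, hurwitzMove_halfTwistMove_hurwitzMoveInv hij hj]

lemma yBraid_sq_apply (hφ : IsHurwitzAction φ) {i j : ℕ} (hij : i < j) (hj : j < n)
    (c : Fin n → G) (hc : Commute (tupleEntry c i) (tupleEntry c j)) :
    φ (yBraid n i j ^ 2) c = c := by
  rw [pow_two, map_mul, Equiv.Perm.mul_apply, yBraid_apply hφ hij hj, yBraid_apply hφ hij hj,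
    halfTwistMove_halfTwistMove hij hj c hc]

end IsHurwitzAction

lemma Equiv.swap_ne_swap_of_nodup {α : Type*} [DecidableEq α] {x y z t : α}
    (h : [x, y, z, t].Nodup) : Equiv.swap x y ≠ Equiv.swap z t := by
  intro hs
  have hd := Equiv.Perm.disjoint_swap_swap h
  rw [hs, Equiv.Perm.disjoint_refl_iff, Equiv.swap_eq_one_iff] at hd
  simp_all

lemma tupleEntry_stdTuple {d n m : ℕ} (hm : m < n) (h : m + 4 ≤ 2 * d) :
    tupleEntry (stdTuple d n) m =
      Equiv.swap ⟨d - 2 - m / 2, by omega⟩ ⟨d - 1 - m / 2, by omega⟩ := by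
  rw [tupleEntry_of_lt _ hm, stdTuple, dif_pos h]

theorem yBraid_type_two_general (d n : ℕ) (hn : 2 * d - 2 ≤ n)
    (i j : ℕ) (hi : i % 2 = 1) (hij : (j - i) % 2 = 1) (hij3 : i + 3 ≤ j)
    (hj : j ≤ 2 * d - 4)
    (φ : BraidGroup n →* Equiv.Perm (Fin n → Equiv.Perm (Fin d)))
    (hφ : IsHurwitzAction φ) :
    φ (yBraid n i j ^ 2) (stdTuple d n) = stdTuple d n ∧
    φ (yBraid n i j) (stdTuple d n) ≠ stdTuple d n := by
  have hij' : i < j := by omega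
  have hjn : j < n := by omega
  have hnodup : [(⟨d - 2 - i / 2, by omega⟩ : Fin d), ⟨d - 1 - i / 2, by omega⟩,
      ⟨d - 2 - j / 2, by omega⟩, ⟨d - 1 - j / 2, by omega⟩].Nodup := by
    simp only [List.nodup_cons, List.mem_cons, Fin.ext_iff, List.not_mem_nil, or_false, not_or,
      not_false_eq_true, List.nodup_nil, and_self, and_true]
    omega
  obtain ⟨hcomm, hne⟩ : Commute (tupleEntry (stdTuple d n) i) (tupleEntry (stdTuple d n) j) ∧
      tupleEntry (stdTuple d n) i ≠ tupleEntry (stdTuple d n) j := by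
    rw [tupleEntry_stdTuple (hij'.trans hjn) (by omega), tupleEntry_stdTuple hjn (by omega)]
    exact ⟨(Equiv.Perm.disjoint_swap_swap hnodup).commute, Equiv.swap_ne_swap_of_nodup hnodup⟩
  rw [hφ.yBraid_apply hij' hjn]
  exact ⟨hφ.yBraid_sq_apply hij' hjn _ hcomm, halfTwistMove_ne hij' hjn _ hne⟩

/-- With respect to the standard coloring, `y_{i,j}` (for `i` odd, `j - i` odd
and `≥ 3`, `j ≤ 2d-4`) is Type 2: its square fixes the standard tuple but the
half-twist itself does not. -/
theorem yBraid_type_two (d n : ℕ) (hd : 3 ≤ d) (hn : 2 * d - 2 ≤ n)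
    (i j : ℕ) (hi : i % 2 = 1) (hij : (j - i) % 2 = 1) (hij3 : i + 3 ≤ j)
    (hj : j ≤ 2 * d - 4)
    (φ : BraidGroup n →* Equiv.Perm (Fin n → Equiv.Perm (Fin d)))
    (hφ : IsHurwitzAction φ) :
    φ (yBraid n i j ^ 2) (stdTuple d n) = stdTuple d n ∧
    φ (yBraid n i j) (stdTuple d n) ≠ stdTuple d n :=
  yBraid_type_two_general d n hn i j hi hij hij3 hj φ hφ
end

section
/- Let d ≥ 3 and n ≥ 2d−2 be integers, and let i, j be indices with i odd, j − i odd, j − i ≥ 3, and j ≤ 2d−4. Define z_{i,j} = σ_{j−1}⁻¹ σ_{j−2}⁻¹ ⋯ σ_{i+1}⁻¹ · σ_i · σ_{i+1} σ_{i+2} ⋯ σ_{j−1} ∈ B_n (the half-twist about the arc from the i-th to the j-th marked point passing behind the intermediate marked points). Then, under the Hurwitz action on (S_d)^n, z_{i,j}² · c⁰ = c⁰ while z_{i,j} · c⁰ ≠ c⁰. (That is, z_{i,j} is Type 2 with respect to the standard coloring — which holds because there is a liftable elementary half-twist x_k strictly between the endpoints — so its square is liftable.) -/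
/-- The braid `z_{i,j} = σ_{j-1}⁻¹ σ_{j-2}⁻¹ ⋯ σ_{i+1}⁻¹ · σ_i · σ_{i+1} σ_{i+2} ⋯ σ_{j-1}`,
the half-twist about the arc from the `i`-th to the `j`-th marked point passing
behind the intermediate marked points. -/
def zBraid (n i j : ℕ) : BraidGroup n :=
  ((List.range (j - 1 - i)).map (fun t => (braidGen n (j - 1 - t))⁻¹)).prod *
    braidGen n i *
    ((List.range (j - 1 - i)).map (fun t => braidGen n (i + 1 + t))).prod

/-!
Write `z_{i,j} = w⁻¹ σ_i w` with `w = σ_{i+1} ⋯ σ_{j-1}`, so that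
`z_{i,j+2} = (σ_j σ_{j+1})⁻¹ z_{i,j} (σ_j σ_{j+1})`. Two local computations drive everything:
if `c_i` and `c_{i+1}` commute, `h_i` just exchanges them; and if `c_t = c_{t+1} = a` with
`a² = 1`, then `h_t ∘ h_{t+1}` sends `(a, a, x)` to `(x, a, a)`, i.e. exchanges the entries at
`t` and `t + 2`. By induction on `j`, `z_{i,j}` therefore exchanges the entries at `i` and `j`
of every tuple whose entries at `i`, `j` commute and whose entries strictly between them come
in equal pairs of involutions. For `c⁰` and odd `i` these pairs are `c⁰_{2k} = c⁰_{2k+1}`, and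
`c⁰_i`, `c⁰_j` are disjoint transpositions: exchanging them changes `c⁰`, exchanging twice does not.
-/

theorem zBraid_add_two (n i j : ℕ) (hij : i < j) :
    zBraid n i (j + 2) =
      (braidGen n j * braidGen n (j + 1))⁻¹ * zBraid n i j *
        (braidGen n j * braidGen n (j + 1)) := by
  obtain ⟨m, rfl⟩ : ∃ m, j = i + 1 + m := ⟨j - i - 1, by omega⟩
  have hl :
      (List.range (i + 1 + m + 2 - 1 - i)).map (fun t => (braidGen n (i + 1 + m + 2 - 1 - t))⁻¹) =
        [(braidGen n (i + 1 + m + 1))⁻¹, (braidGen n (i + 1 + m))⁻¹] ++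
        (List.range (i + 1 + m - 1 - i)).map (fun t => (braidGen n (i + 1 + m - 1 - t))⁻¹) := by
    rw [show i + 1 + m + 2 - 1 - i = 2 + m by omega, show i + 1 + m - 1 - i = m by omega,
      List.range_add, List.map_append, List.map_map]
    congr 1
    refine List.map_congr_left fun t _ => ?_
    simp only [Function.comp_apply]
    congr 2
    omega
  have hr : (List.range (i + 1 + m + 2 - 1 - i)).map (fun t => braidGen n (i + 1 + t)) =
      (List.range (i + 1 + m - 1 - i)).map (fun t => braidGen n (i + 1 + t)) ++
        [braidGen n (i + 1 + m), braidGen n (i + 1 + m + 1)] := by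
    rw [show i + 1 + m + 2 - 1 - i = m + 2 by omega, show i + 1 + m - 1 - i = m by omega,
      List.range_add, List.map_append, List.map_map]
    simp [List.range_succ, add_assoc]
  simp only [zBraid, hl, hr, List.prod_append, List.prod_cons, List.prod_nil, mul_one, mul_inv_rev]
  group

theorem zBraid_self_add_one (n i : ℕ) : zBraid n i (i + 1) = braidGen n i := by
  simp [zBraid]

section Hurwitz

variable {G : Type*} [Group G] {n : ℕ}

theorem hurwitzMove_eq_comp_swap (c : Fin n → G) {i : ℕ} (h : i + 1 < n)
    (hc : Commute (c ⟨i, by omega⟩) (c ⟨i + 1, h⟩)) :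
    hurwitzMove i c = c ∘ Equiv.swap ⟨i, by omega⟩ ⟨i + 1, h⟩ := by
  funext k
  simp only [hurwitzMove, Function.comp_apply, Equiv.swap_apply_def, Fin.ext_iff, h, dite_true]
  split_ifs <;> simp [hc.eq]

theorem hurwitzMove_hurwitzMove_succ_eq_comp_swap (c : Fin n → G) {t : ℕ} (h : t + 2 < n)
    (heq : c ⟨t, by omega⟩ = c ⟨t + 1, by omega⟩)
    (hinv : c ⟨t, by omega⟩ * c ⟨t, by omega⟩ = 1) :
    hurwitzMove t (hurwitzMove (t + 1) c) = c ∘ Equiv.swap ⟨t, by omega⟩ ⟨t + 2, h⟩ := by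
  have hinv' : (c ⟨t, by omega⟩)⁻¹ = c ⟨t, by omega⟩ := inv_eq_of_mul_eq_one_right hinv
  funext ⟨k, hk⟩
  rcases (show k = t ∨ k = t + 1 ∨ k = t + 2 ∨ (k ≠ t ∧ k ≠ t + 1 ∧ k ≠ t + 2) by omega) with
    rfl | rfl | rfl | ⟨h0, h1, h2⟩
  · simp only [hurwitzMove, show k + 1 < n by omega, h, hinv', ← heq, mul_assoc]
    simp [← mul_assoc, hinv]
  · simp [hurwitzMove, Equiv.swap_apply_of_ne_of_ne, heq]
  · simp [hurwitzMove, heq]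
  · simp [hurwitzMove, Equiv.swap_apply_of_ne_of_ne, Fin.ext_iff, h0, h1, h2]

theorem IsHurwitzAction.braidGen_mul_braidGen_succ_apply
    {φ : BraidGroup n →* Equiv.Perm (Fin n → G)} (hφ : IsHurwitzAction φ) (c : Fin n → G)
    {t : ℕ} (h : t + 2 < n) (heq : c ⟨t, by omega⟩ = c ⟨t + 1, by omega⟩)
    (hinv : c ⟨t, by omega⟩ * c ⟨t, by omega⟩ = 1) :
    φ (braidGen n t * braidGen n (t + 1)) c = c ∘ Equiv.swap ⟨t, by omega⟩ ⟨t + 2, h⟩ := by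
  rw [map_mul, Equiv.Perm.mul_apply, hφ _ h, hφ _ (by omega),
    hurwitzMove_hurwitzMove_succ_eq_comp_swap c h heq hinv]

def InvolutionPairsBetween (c : Fin n → G) (i j : ℕ) : Prop :=
  ∀ k l : Fin n, i < k → (l : ℕ) = k + 1 → (l : ℕ) < j → ((k : ℕ) - i) % 2 = 1 →
    c k = c l ∧ c k * c k = 1

theorem InvolutionPairsBetween.mono {c : Fin n → G} {i j j' : ℕ}
    (hc : InvolutionPairsBetween c i j) (hj : j' ≤ j) : InvolutionPairsBetween c i j' :=
  fun k l hk hl hlj hki => hc k l hk hl (by omega) hki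

theorem InvolutionPairsBetween.comp_swap {c : Fin n → G} {i j : ℕ}
    (hc : InvolutionPairsBetween c i j) {a b : Fin n} (ha : (a : ℕ) ≤ i ∨ j ≤ a)
    (hb : (b : ℕ) ≤ i ∨ j ≤ b) : InvolutionPairsBetween (c ∘ Equiv.swap a b) i j := by
  intro k l hk hl hlj hki
  have hfix : ∀ m : Fin n, i < m → (m : ℕ) < j → Equiv.swap a b m = m := fun m h1 h2 =>
    Equiv.swap_apply_of_ne_of_ne (fun h => by subst h; omega) (fun h => by subst h; omega)
  simp only [Function.comp_apply, hfix k hk (by omega), hfix l (by omega) hlj]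
  exact hc k l hk hl hlj hki

theorem IsHurwitzAction.zBraid_apply {φ : BraidGroup n →* Equiv.Perm (Fin n → G)}
    (hφ : IsHurwitzAction φ) {i j : ℕ} (hji : (j - i) % 2 = 1) (hj : j < n)
    (c : Fin n → G) (hcomm : Commute (c ⟨i, by omega⟩) (c ⟨j, hj⟩))
    (hpair : InvolutionPairsBetween c i j) :
    φ (zBraid n i j) c = c ∘ Equiv.swap ⟨i, by omega⟩ ⟨j, hj⟩ := by
  obtain ⟨p, hp⟩ : ∃ p, j = i + 1 + 2 * p := ⟨(j - i - 1) / 2, by omega⟩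
  induction p generalizing j c with
  | zero => subst hp; rw [zBraid_self_add_one, hφ i hj, hurwitzMove_eq_comp_swap c hj hcomm]
  | succ p ih =>
    set j₀ := i + 1 + 2 * p
    obtain rfl : j = j₀ + 2 := by omega
    obtain ⟨heq, hinv⟩ := hpair ⟨j₀, by omega⟩ ⟨j₀ + 1, by omega⟩ (by simp; omega) rfl
      (by simp) (by simp; omega)
    have hi₀ : (⟨i, by omega⟩ : Fin n) ≠ ⟨j₀ + 2, hj⟩ := by simp; omega
    have hi₁ : (⟨i, by omega⟩ : Fin n) ≠ ⟨j₀, by omega⟩ := by simp; omega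
    have hcomm' : Commute ((c ∘ Equiv.swap ⟨j₀, by omega⟩ ⟨j₀ + 2, hj⟩) ⟨i, by omega⟩)
        ((c ∘ Equiv.swap ⟨j₀, by omega⟩ ⟨j₀ + 2, hj⟩) ⟨j₀, by omega⟩) := by
      simpa [Equiv.swap_apply_of_ne_of_ne hi₁ hi₀] using hcomm
    have hpair' : InvolutionPairsBetween (c ∘ Equiv.swap ⟨j₀, by omega⟩ ⟨j₀ + 2, hj⟩) i j₀ :=
      (hpair.mono (by omega)).comp_swap (by simp) (by simp)
    have hfix₀ : Equiv.swap (⟨i, by omega⟩ : Fin n) ⟨j₀ + 2, hj⟩ ⟨j₀, by omega⟩ = ⟨j₀, by omega⟩ :=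
      Equiv.swap_apply_of_ne_of_ne (by simp; omega) (by simp)
    have hfix₁ :
        Equiv.swap (⟨i, by omega⟩ : Fin n) ⟨j₀ + 2, hj⟩ ⟨j₀ + 1, by omega⟩ = ⟨j₀ + 1, by omega⟩ :=
      Equiv.swap_apply_of_ne_of_ne (by simp; omega) (by simp)
    -- `σ_{j₀} σ_{j₀+1}` carries `c_{j₀+2}` down to `j₀`, where the induction hypothesis applies.
    rw [zBraid_add_two n i j₀ (by omega), map_mul, map_mul, map_inv, Equiv.Perm.mul_apply,
      Equiv.Perm.mul_apply, hφ.braidGen_mul_braidGen_succ_apply c hj heq hinv,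
      ih (by omega) (by omega) _ hcomm' hpair' rfl, Equiv.Perm.inv_eq_iff_eq,
      hφ.braidGen_mul_braidGen_succ_apply _ hj]
    · rw [Function.comp_assoc, Function.comp_assoc, ← Equiv.Perm.coe_mul, ← Equiv.Perm.coe_mul,
        Equiv.mul_swap_eq_swap_mul, Equiv.swap_apply_left, Equiv.swap_apply_of_ne_of_ne hi₁ hi₀]
    · simpa [hfix₀, hfix₁] using heq
    · simpa [hfix₀] using hinv

theorem IsHurwitzAction.zBraid_sq_apply {φ : BraidGroup n →* Equiv.Perm (Fin n → G)}
    (hφ : IsHurwitzAction φ) {i j : ℕ} (hji : (j - i) % 2 = 1) (hj : j < n)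
    (c : Fin n → G) (hcomm : Commute (c ⟨i, by omega⟩) (c ⟨j, hj⟩))
    (hpair : InvolutionPairsBetween c i j) :
    φ (zBraid n i j ^ 2) c = c := by
  have hcomm' : Commute ((c ∘ Equiv.swap ⟨i, by omega⟩ ⟨j, hj⟩) ⟨i, by omega⟩)
      ((c ∘ Equiv.swap ⟨i, by omega⟩ ⟨j, hj⟩) ⟨j, hj⟩) := by
    simpa using hcomm.symm
  rw [sq, map_mul, Equiv.Perm.mul_apply, hφ.zBraid_apply hji hj c hcomm hpair,
    hφ.zBraid_apply hji hj _ hcomm' (hpair.comp_swap (.inl le_rfl) (.inr le_rfl)),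
    Function.comp_assoc, ← Equiv.Perm.coe_mul, Equiv.swap_mul_self, Equiv.Perm.coe_one,
    Function.comp_id]

end Hurwitz

theorem stdTuple_mul_self (d n : ℕ) (k : Fin n) : stdTuple d n k * stdTuple d n k = 1 := by
  unfold stdTuple
  split_ifs <;> simp

theorem stdTuple_eq_of_even {d n : ℕ} {k l : Fin n} (hk : (k : ℕ) % 2 = 0)
    (hl : (l : ℕ) = k + 1) : stdTuple d n k = stdTuple d n l := by
  unfold stdTuple
  split_ifs <;> first | rfl | omega | (congr 1 <;> ext <;> simp <;> omega)

theorem stdTuple_involutionPairsBetween (d n : ℕ) {i : ℕ} (hi : i % 2 = 1) (j : ℕ) :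
    InvolutionPairsBetween (stdTuple d n) i j := fun k l _ hl _ hki =>
  ⟨stdTuple_eq_of_even (by omega) hl, stdTuple_mul_self d n k⟩

theorem stdTuple_disjoint {d n : ℕ} {k l : Fin n} (hl : (l : ℕ) + 4 ≤ 2 * d)
    (hkl : (k : ℕ) / 2 + 2 ≤ l / 2) : (stdTuple d n k).Disjoint (stdTuple d n l) := by
  unfold stdTuple
  rw [dif_pos (by omega), dif_pos hl]
  exact Equiv.Perm.disjoint_swap_swap (by simp [Fin.ext_iff]; omega)

theorem stdTuple_ne_one {d n : ℕ} {k : Fin n} (hk : (k : ℕ) + 4 ≤ 2 * d) :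
    stdTuple d n k ≠ 1 := by
  unfold stdTuple
  rw [dif_pos hk, Ne, Equiv.swap_eq_one_iff]
  simp [Fin.ext_iff]
  omega

theorem zBraid_type_two_general (d n : ℕ) (hn : 2 * d - 2 ≤ n)
    (i j : ℕ) (hi : i % 2 = 1) (hij : (j - i) % 2 = 1) (hij3 : i + 3 ≤ j)
    (hj : j ≤ 2 * d - 4)
    (φ : BraidGroup n →* Equiv.Perm (Fin n → Equiv.Perm (Fin d)))
    (hφ : IsHurwitzAction φ) :
    φ (zBraid n i j ^ 2) (stdTuple d n) = stdTuple d n ∧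
    φ (zBraid n i j) (stdTuple d n) ≠ stdTuple d n := by
  have hjn : j < n := by omega
  have hdisj : (stdTuple d n ⟨i, by omega⟩).Disjoint (stdTuple d n ⟨j, hjn⟩) :=
    stdTuple_disjoint (by simp; omega) (by simp; omega)
  have hpair := stdTuple_involutionPairsBetween d n hi j
  refine ⟨hφ.zBraid_sq_apply hij hjn _ hdisj.commute hpair, fun hfix => ?_⟩
  rw [hφ.zBraid_apply hij hjn _ hdisj.commute hpair] at hfix
  have hji : stdTuple d n ⟨j, hjn⟩ = stdTuple d n ⟨i, by omega⟩ := by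
    simpa using congrFun hfix ⟨i, by omega⟩
  rw [hji, Equiv.Perm.disjoint_refl_iff] at hdisj
  exact stdTuple_ne_one (by simp; omega) hdisj

/-- With respect to the standard coloring, `z_{i,j}` (for `i` odd, `j - i` odd
and `≥ 3`, `j ≤ 2d-4`) is Type 2: its square fixes the standard tuple but the
half-twist itself does not. -/
theorem zBraid_type_two (d n : ℕ) (hd : 3 ≤ d) (hn : 2 * d - 2 ≤ n)
    (i j : ℕ) (hi : i % 2 = 1) (hij : (j - i) % 2 = 1) (hij3 : i + 3 ≤ j)
    (hj : j ≤ 2 * d - 4)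
    (φ : BraidGroup n →* Equiv.Perm (Fin n → Equiv.Perm (Fin d)))
    (hφ : IsHurwitzAction φ) :
    φ (zBraid n i j ^ 2) (stdTuple d n) = stdTuple d n ∧
    φ (zBraid n i j) (stdTuple d n) ≠ stdTuple d n :=
  zBraid_type_two_general d n hn i j hi hij hij3 hj φ hφ
end
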